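/- arXiv:1406.1917 — 8 statements merged into one kernel-verified Lean document; each statement's English description precedes it below -/
import Mathlib

section
/- Let s≥1 be an integer and define T_n^{(s)}(x) by T_0=1, T_1=x, T_n(x)=2x·T_{n-1}(x)+((x²-1)(s-1)-1)·T_{n-2}(x) for n≥2. Then for every n≥1, the polynomial T_n^{(s)} has n distinct real roots, all lying in the open interval (-1,1). -/
lemma aux_eval (s : ℕ) (T : ℕ → Polynomial ℝ)
    (h0 : T 0 = 1) (h1 : T 1 = Polynomial.X)
    (hrec : ∀ n, T (n + 2) = 2 * Polynomial.X * T (n + 1)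
      + ((Polynomial.X ^ 2 - 1) * Polynomial.C ((s : ℝ) - 1) - 1) * T n) :
    ∀ (n : ℕ) (x y : ℝ), x ^ 2 + y ^ 2 = 1 →
      (T n).eval x = (((x : ℂ) + ((Real.sqrt s * y : ℝ) : ℂ) * Complex.I) ^ n).re := by
  intro n
  induction n using Nat.twoStepInduction with
  | zero => intro x y h; simp [h0]
  | one => intro x y h; simp [h1]
  | more n ih1 ih2 =>
    intro x y h
    set z : ℂ := (x : ℂ) + ((Real.sqrt s * y : ℝ) : ℂ) * Complex.I with hz
    have hs2 : (Real.sqrt s) ^ 2 = (s : ℝ) := Real.sq_sqrt (by positivity)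
    have hz2 : z ^ 2 = 2 * (x:ℂ) * z - ((x^2 + s * y^2 : ℝ) : ℂ) := by
      rw [hz]
      apply Complex.ext <;>
        simp [Complex.mul_re, Complex.mul_im, pow_two] <;> nlinarith [hs2]
    have key : z ^ (n+2) = 2*(x:ℂ) * z^(n+1) - ((x^2 + s*y^2 : ℝ):ℂ) * z^n := by
      have h2 : z^(n+2) = z^2 * z^n := by ring
      rw [h2, hz2]; ring
    have hc : ((x:ℝ)^2 - 1) * ((s:ℝ) - 1) - 1 = -(x^2 + (s:ℝ)*y^2) := by nlinarith
    rw [hrec n]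
    simp only [Polynomial.eval_add, Polynomial.eval_mul, Polynomial.eval_sub,
      Polynomial.eval_one, Polynomial.eval_pow, Polynomial.eval_X, Polynomial.eval_C,
      Polynomial.eval_ofNat]
    rw [ih1 x y h, ih2 x y h, hc, ← hz, key]
    have h2x : (2*(x:ℂ)) = ((2*x:ℝ):ℂ) := by push_cast; ring
    rw [Complex.sub_re, h2x, Complex.re_ofReal_mul, Complex.re_ofReal_mul]
    ring

lemma aux_deg (s : ℕ) (T : ℕ → Polynomial ℝ)
    (h0 : T 0 = 1) (h1 : T 1 = Polynomial.X)
    (hrec : ∀ n, T (n + 2) = 2 * Polynomial.X * T (n + 1)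
      + ((Polynomial.X ^ 2 - 1) * Polynomial.C ((s : ℝ) - 1) - 1) * T n) :
    ∀ n, (T n).natDegree ≤ n := by
  intro n
  induction n using Nat.twoStepInduction with
  | zero => simp [h0]
  | one => simp [h1]
  | more n ih1 ih2 =>
    rw [hrec n]
    refine le_trans (Polynomial.natDegree_add_le _ _) (max_le ?_ ?_)
    · refine le_trans (Polynomial.natDegree_mul_le) ?_
      have hx : (2 * Polynomial.X : Polynomial ℝ).natDegree ≤ 1 := by compute_degree
      omega
    · refine le_trans (Polynomial.natDegree_mul_le) ?_
      have hx : ((Polynomial.X ^ 2 - 1) * Polynomial.C ((s : ℝ) - 1) - 1).natDegree ≤ 2 := by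
        compute_degree
      omega

set_option maxHeartbeats 1000000 in
theorem stmt_1 (s : ℕ) (hs : 1 ≤ s) (T : ℕ → Polynomial ℝ)
    (h0 : T 0 = 1) (h1 : T 1 = Polynomial.X)
    (hrec : ∀ n, T (n + 2) = 2 * Polynomial.X * T (n + 1)
      + ((Polynomial.X ^ 2 - 1) * Polynomial.C ((s : ℝ) - 1) - 1) * T n) :
    ∀ n : ℕ, 1 ≤ n →
      (T n).roots.toFinset.card = n ∧
      ∀ x ∈ (T n).roots.toFinset, x ∈ Set.Ioo (-1 : ℝ) 1 := by
  intro n hn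
  have hnR : (0:ℝ) < n := by exact_mod_cast hn
  have hnne : (n:ℝ) ≠ 0 := ne_of_gt hnR
  have hS1 : (1:ℝ) ≤ (s:ℝ) := by exact_mod_cast hs
  have hSpos : (0:ℝ) < (s:ℝ) := by linarith
  set t : ℝ := 1 / (s:ℝ) with hts
  have ht0 : 0 < t := by positivity
  have ht1 : t ≤ 1 := by rw [hts, div_le_one hSpos]; linarith
  have hsqrtS : 0 < Real.sqrt s := Real.sqrt_pos.2 hSpos
  set g : ℝ → ℝ := fun c => c^2 + (1 - c^2) * t with hg
  have hgpos : ∀ c : ℝ, c^2 ≤ 1 → 0 < g c := by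
    intro c hc; simp only [hg]; nlinarith
  have hDpos : ∀ c : ℝ, c^2 ≤ 1 → 0 < Real.sqrt (g c) :=
    fun c hc => Real.sqrt_pos.2 (hgpos c hc)
  -- monotonicity of c ↦ c / √(g c)
  have hfmono : ∀ c1 c2 : ℝ, -1 ≤ c1 → c2 ≤ 1 → c1 < c2 →
      c1 / Real.sqrt (g c1) < c2 / Real.sqrt (g c2) := by
    intro c1 c2 h1 h2 hlt
    have hc1 : c1^2 ≤ 1 := by nlinarith
    have hc2 : c2^2 ≤ 1 := by nlinarith
    have d1 := hDpos c1 hc1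
    have d2 := hDpos c2 hc2
    have e1 : (Real.sqrt (g c1))^2 = g c1 := Real.sq_sqrt (hgpos c1 hc1).le
    have e2 : (Real.sqrt (g c2))^2 = g c2 := Real.sq_sqrt (hgpos c2 hc2).le
    rw [div_lt_div_iff₀ d1 d2]
    rcases le_or_gt 0 c1 with hpos | hneg
    · have h0c2 : 0 < c2 := lt_of_le_of_lt hpos hlt
      have hsqlt : c1^2 < c2^2 := by nlinarith
      have hsq : (c1 * Real.sqrt (g c2))^2 < (c2 * Real.sqrt (g c1))^2 := by
        rw [mul_pow, mul_pow, e1, e2]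
        simp only [hg]
        nlinarith [mul_lt_mul_of_pos_right hsqlt ht0]
      exact lt_of_pow_lt_pow_left₀ 2 (by positivity) hsq
    · rcases le_or_gt c2 0 with hc2n | hc2p
      · have hsqlt : c2^2 < c1^2 := by nlinarith
        have hsq : (c2 * Real.sqrt (g c1))^2 < (c1 * Real.sqrt (g c2))^2 := by
          rw [mul_pow, mul_pow, e1, e2]
          simp only [hg]
          nlinarith [mul_lt_mul_of_pos_right hsqlt ht0]
        have hsq' : (-(c2 * Real.sqrt (g c1)))^2 < (-(c1 * Real.sqrt (g c2)))^2 := by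
          rw [neg_pow, neg_pow]
          simpa using hsq
        have hnn : (0:ℝ) ≤ -(c1 * Real.sqrt (g c2)) := by
          have := mul_neg_of_neg_of_pos hneg d2
          linarith
        have h2' : -(c2 * Real.sqrt (g c1)) < -(c1 * Real.sqrt (g c2)) :=
          lt_of_pow_lt_pow_left₀ 2 hnn hsq'
        linarith
      · have hl : c1 * Real.sqrt (g c2) < 0 := mul_neg_of_neg_of_pos hneg d2
        have hr : 0 < c2 * Real.sqrt (g c1) := mul_pos hc2p d1
        linarith
  -- the special points
  set ph : ℕ → ℝ := fun k => k * Real.pi / n with hph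
  set cc : ℕ → ℝ := fun k => Real.cos (ph k) with hcc
  set D : ℕ → ℝ := fun k => Real.sqrt (g (cc k)) with hD
  set X : ℕ → ℝ := fun k => cc k / D k with hX
  have hccsq : ∀ k, (cc k)^2 ≤ 1 := by
    intro k; simp only [hcc]; exact Real.cos_sq_le_one _
  have hccmem : ∀ k, -1 ≤ cc k ∧ cc k ≤ 1 := by
    intro k; exact ⟨Real.neg_one_le_cos _, Real.cos_le_one _⟩
  have hDk : ∀ k, 0 < D k := fun k => hDpos _ (hccsq k)
  have hDsq : ∀ k, (D k)^2 = g (cc k) := fun k => Real.sq_sqrt (hgpos _ (hccsq k)).le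
  have hphmem : ∀ k, k ≤ n → ph k ∈ Set.Icc 0 Real.pi := by
    intro k hk
    constructor
    · simp only [hph]; positivity
    · simp only [hph]
      rw [div_le_iff₀ hnR]
      have : (k:ℝ) ≤ n := by exact_mod_cast hk
      nlinarith [Real.pi_pos]
  have hXanti : ∀ i j, i < j → j ≤ n → X j < X i := by
    intro i j hij hjn
    have hcij : cc j < cc i := by
      simp only [hcc]
      apply Real.strictAntiOn_cos (hphmem i (by omega)) (hphmem j hjn)
      simp only [hph]
      have hij' : (i:ℝ) < j := by exact_mod_cast hij
      have hpi := Real.pi_pos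
      rw [div_lt_div_iff₀ hnR hnR]
      exact mul_lt_mul_of_pos_right (mul_lt_mul_of_pos_right hij' hpi) hnR
    simp only [hX, hD]
    exact hfmono _ _ (hccmem j).1 (hccmem i).2 hcij
  have hXle : ∀ i j, i ≤ j → j ≤ n → X j ≤ X i := by
    intro i j hij hjn
    rcases eq_or_lt_of_le hij with h | h
    · rw [h]
    · exact (hXanti i j h hjn).le
  -- evaluation at the special points
  have heval : ∀ k : ℕ, (T n).eval (X k) = (-1:ℝ)^k * ((D k)⁻¹)^n := by
    intro k
    set yk : ℝ := Real.sin (ph k) / (Real.sqrt s * D k) with hyk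
    have hsin : Real.sin (ph k) ^ 2 = 1 - cc k ^ 2 := by
      simp only [hcc]; exact Real.sin_sq _
    have hxy : (X k)^2 + yk^2 = 1 := by
      simp only [hX, hyk]
      rw [div_pow, div_pow, mul_pow, hDsq k, Real.sq_sqrt hSpos.le, hsin]
      have hgk := hgpos _ (hccsq k)
      have hgk' : g (cc k) ≠ 0 := ne_of_gt hgk
      have hsne : (s:ℝ) ≠ 0 := ne_of_gt hSpos
      field_simp
      simp only [hg, hts]
      field_simp
    have hzexp : ((X k : ℂ) + ((Real.sqrt s * yk : ℝ) : ℂ) * Complex.I)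
        = (((D k)⁻¹ : ℝ) : ℂ) * Complex.exp ((ph k : ℝ) * Complex.I) := by
      have hy' : Real.sqrt s * yk = Real.sin (ph k) / D k := by
        rw [hyk, mul_div_assoc']
        exact mul_div_mul_left _ _ (ne_of_gt hsqrtS)
      rw [hy', Complex.exp_mul_I, ← Complex.ofReal_cos, ← Complex.ofReal_sin]
      simp only [hX, hcc]
      have hDne : (D k : ℝ) ≠ 0 := ne_of_gt (hDk k)
      push_cast
      field_simp
    rw [aux_eval s T h0 h1 hrec n (X k) yk hxy, hzexp]
    rw [mul_pow, ← Complex.ofReal_pow, ← Complex.exp_nat_mul]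
    have harg : (n : ℂ) * ((ph k : ℝ) * Complex.I) = ((k * Real.pi : ℝ) : ℂ) * Complex.I := by
      have hnC : (n:ℂ) ≠ 0 := by exact_mod_cast hnne
      simp only [hph]
      push_cast
      field_simp
    rw [harg, Complex.re_ofReal_mul, Complex.exp_ofReal_mul_I_re]
    have hcosk : Real.cos (k * Real.pi) = (-1:ℝ)^k := by
      simpa using Real.cos_nat_mul_pi_sub 0 k
    rw [hcosk]; ring
  have hEpos : ∀ k : ℕ, 0 < ((D k)⁻¹:ℝ)^n := by
    intro k
    have := hDk k
    positivity
  -- T n is nonzero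
  have hTne : T n ≠ 0 := by
    intro hcon
    have h := heval 0
    rw [hcon] at h
    simp only [Polynomial.eval_zero, pow_zero, one_mul] at h
    have h2 := hEpos 0
    rw [← h] at h2
    exact lt_irrefl _ h2
  -- roots via IVT
  have hex : ∀ k : Fin n, ∃ r, r ∈ Set.Ioo (X ((k:ℕ)+1)) (X (k:ℕ)) ∧ (T n).eval r = 0 := by
    intro k
    have hk1n : (k:ℕ)+1 ≤ n := k.isLt
    have hlt : X ((k:ℕ)+1) < X (k:ℕ) := hXanti _ _ (lt_add_one _) hk1n
    have cont : ContinuousOn (fun x => (T n).eval x) (Set.Icc (X ((k:ℕ)+1)) (X (k:ℕ))) :=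
      ((T n).continuous).continuousOn
    rcases Nat.even_or_odd (k:ℕ) with he | ho
    · have hk : (0:ℝ) < (T n).eval (X (k:ℕ)) := by
        rw [heval (k:ℕ), he.neg_one_pow]
        simpa using hEpos (k:ℕ)
      have hk1 : (T n).eval (X ((k:ℕ)+1)) < 0 := by
        rw [heval ((k:ℕ)+1), (by simpa using he.add_one : Odd ((k:ℕ)+1)).neg_one_pow]
        nlinarith [hEpos ((k:ℕ)+1)]
      have h0m : (0:ℝ) ∈ Set.Ioo ((fun x => (T n).eval x) (X ((k:ℕ)+1)))
          ((fun x => (T n).eval x) (X (k:ℕ))) := ⟨hk1, hk⟩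
      obtain ⟨r, hr, hr0⟩ := intermediate_value_Ioo hlt.le cont h0m
      exact ⟨r, hr, hr0⟩
    · have hk : (T n).eval (X (k:ℕ)) < 0 := by
        rw [heval (k:ℕ), ho.neg_one_pow]
        nlinarith [hEpos (k:ℕ)]
      have hk1 : (0:ℝ) < (T n).eval (X ((k:ℕ)+1)) := by
        rw [heval ((k:ℕ)+1), (by simpa using ho.add_one : Even ((k:ℕ)+1)).neg_one_pow]
        simpa using hEpos ((k:ℕ)+1)
      have h0m : (0:ℝ) ∈ Set.Ioo ((fun x => (T n).eval x) (X (k:ℕ)))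
          ((fun x => (T n).eval x) (X ((k:ℕ)+1))) := ⟨hk, hk1⟩
      obtain ⟨r, hr, hr0⟩ := intermediate_value_Ioo' hlt.le cont h0m
      exact ⟨r, hr, hr0⟩
  choose r hrmem hrzero using hex
  -- r is strictly decreasing hence injective
  have hranti : ∀ i j : Fin n, (i:ℕ) < (j:ℕ) → r j < r i := by
    intro i j hij
    have h1 : r j < X (j:ℕ) := (hrmem j).2
    have h2 : X (j:ℕ) ≤ X ((i:ℕ)+1) := hXle _ _ (by omega) (by omega)
    have h3 : X ((i:ℕ)+1) < r i := (hrmem i).1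
    linarith
  have hrinj : Function.Injective r := by
    intro i j hij
    rcases lt_trichotomy (i:ℕ) (j:ℕ) with h | h | h
    · exact absurd hij (hranti i j h).ne'
    · exact Fin.ext h
    · exact absurd hij (hranti j i h).ne
  set S : Finset ℝ := Finset.image r Finset.univ with hSdef
  have hScard : S.card = n := by
    rw [hSdef, Finset.card_image_of_injective _ hrinj, Finset.card_univ, Fintype.card_fin]
  have hsub : S ⊆ (T n).roots.toFinset := by
    intro x hx
    rw [hSdef] at hx
    obtain ⟨k, _, hk⟩ := Finset.mem_image.1 hx
    rw [Multiset.mem_toFinset, Polynomial.mem_roots']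
    exact ⟨hTne, by rw [← hk]; exact hrzero k⟩
  have hcardle : (T n).roots.toFinset.card ≤ n :=
    le_trans (Multiset.toFinset_card_le _)
      (le_trans ((T n).card_roots') (aux_deg s T h0 h1 hrec n))
  have hcardge : n ≤ (T n).roots.toFinset.card := by
    have h := Finset.card_le_card hsub
    rw [hScard] at h
    exact h
  have hcard : (T n).roots.toFinset.card = n := le_antisymm hcardle hcardge
  have hSeq : S = (T n).roots.toFinset :=
    Finset.eq_of_subset_of_card_le hsub (by omega)
  -- endpoints
  have hX0 : X 0 = 1 := by
    simp only [hX, hD, hcc, hph, hg]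
    norm_num
  have hXn : X n = -1 := by
    have hphn : ph n = Real.pi := by
      simp only [hph]; field_simp
    simp only [hX, hD, hcc, hg, hphn]
    norm_num
  refine ⟨hcard, ?_⟩
  intro x hx
  rw [← hSeq, hSdef] at hx
  obtain ⟨k, _, hk⟩ := Finset.mem_image.1 hx
  have hm := hrmem k
  have hup : X (k:ℕ) ≤ 1 := by rw [← hX0]; exact hXle 0 (k:ℕ) (Nat.zero_le _) (by omega)
  have hlo : -1 ≤ X ((k:ℕ)+1) := by
    rw [← hXn]; exact hXle ((k:ℕ)+1) n k.isLt le_rfl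
  constructor
  · rw [← hk]; linarith [hm.1]
  · rw [← hk]; linarith [hm.2]
end

section
/- Let s≥1 be an integer and define T_n^{(s)}(x) as in the recurrence T_0=1, T_1=x, T_n=2x·T_{n-1}+((x²-1)(s-1)-1)·T_{n-2}. Define φ(x)=x/√(x²+s(1-x²)) for x∈[-1,1] and α(x)=arccos(φ(x)). Then for all x∈[-1,1] and n≥0, T_n^{(s)}(x) = (√(x²+s(1-x²)))^n · cos(n·α(x)). -/
theorem stmt_2 (s : ℕ) (hs : 1 ≤ s) (T : ℕ → ℝ → ℝ)
    (h0 : ∀ x, T 0 x = 1) (h1 : ∀ x, T 1 x = x)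
    (hrec : ∀ n x, T (n + 2) x =
      2 * x * T (n + 1) x + ((x ^ 2 - 1) * ((s : ℝ) - 1) - 1) * T n x) :
    ∀ (n : ℕ), ∀ x ∈ Set.Icc (-1 : ℝ) 1,
      T n x = (Real.sqrt (x ^ 2 + s * (1 - x ^ 2))) ^ n *
        Real.cos (n * Real.arccos (x / Real.sqrt (x ^ 2 + s * (1 - x ^ 2)))) := by
  intro n x hx
  obtain ⟨hx1, hx2⟩ := hx
  have hs1 : (1 : ℝ) ≤ s := by exact_mod_cast hs
  set r := Real.sqrt (x ^ 2 + s * (1 - x ^ 2)) with hrdef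
  have hxsq : x ^ 2 ≤ 1 := by nlinarith
  have hge1 : (1 : ℝ) ≤ x ^ 2 + s * (1 - x ^ 2) := by nlinarith
  have hnn : (0 : ℝ) ≤ x ^ 2 + s * (1 - x ^ 2) := by linarith
  have hr2 : r ^ 2 = x ^ 2 + s * (1 - x ^ 2) := Real.sq_sqrt hnn
  have hr1 : (1 : ℝ) ≤ r := by
    nlinarith [Real.sqrt_nonneg (x ^ 2 + s * (1 - x ^ 2))]
  have hrpos : (0 : ℝ) < r := lt_of_lt_of_le one_pos hr1
  have hxr : |x| ≤ r := by
    have : x ^ 2 ≤ r ^ 2 := by nlinarith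
    nlinarith [sq_abs x, abs_nonneg x]
  have hle1 : x / r ≤ 1 := by
    rw [div_le_one hrpos]; cases abs_le.mp (le_refl |x|) with
    | intro h1 h2 => linarith [le_abs_self x]
  have hge : (-1 : ℝ) ≤ x / r := by
    rw [le_div_iff₀ hrpos]; linarith [neg_abs_le x]
  have hcos : Real.cos (Real.arccos (x / r)) = x / r := Real.cos_arccos hge hle1
  set a := Real.arccos (x / r) with hadef
  induction n using Nat.twoStepInduction with
  | zero => simp [h0 x]
  | one =>
    rw [h1 x]
    push_cast
    rw [one_mul, hcos, pow_one]
    field_simp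
  | more n ih1 ih2 =>
    rw [hrec n x, ih1, ih2]
    have hkey : Real.cos (((n : ℝ) + 2) * a) =
        2 * Real.cos (((n : ℝ) + 1) * a) * Real.cos a - Real.cos ((n : ℝ) * a) := by
      have e1 : ((n : ℝ) + 2) * a = ((n : ℝ) + 1) * a + a := by ring
      have e2 : (n : ℝ) * a = ((n : ℝ) + 1) * a - a := by ring
      rw [e1, e2, Real.cos_add, Real.cos_sub]; ring
    push_cast
    rw [hkey, hcos]
    have hcoef : ((x ^ 2 - 1) * ((s : ℝ) - 1) - 1) = -(r ^ 2) := by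
      rw [hr2]; ring
    rw [hcoef]
    field_simp
    ring
end

section
/- With u(x), v(x) as above (m,e>0 real), the inequality x·(u(x)+v(x)) ≤ 0 holds for all x∈[-1,1], with equality exactly when x∈{−1,0,1}. -/
/-- The real cube root of a real number (defined for negative inputs as well). -/
noncomputable def cbrt (y : ℝ) : ℝ := Real.sign y * |y| ^ ((1 : ℝ) / 3)

lemma cbrt_zero : cbrt 0 = 0 := by simp [cbrt]

lemma cbrt_of_pos {y : ℝ} (hy : 0 < y) : cbrt y = y ^ ((1:ℝ)/3) := by
  rw [cbrt, Real.sign_of_pos hy, abs_of_pos hy, one_mul]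

lemma cbrt_pos {y : ℝ} (hy : 0 < y) : 0 < cbrt y := by
  rw [cbrt_of_pos hy]; exact Real.rpow_pos_of_pos hy _

lemma cbrt_neg (y : ℝ) : cbrt (-y) = - cbrt y := by
  rw [cbrt, cbrt, Real.sign_neg, abs_neg]; ring

lemma cbrt_nonneg {y : ℝ} (hy : 0 ≤ y) : 0 ≤ cbrt y := by
  rcases hy.eq_or_lt with h | h
  · simp [← h, cbrt_zero]
  · exact (cbrt_pos h).le

lemma cbrt_lt_cbrt {a b : ℝ} (ha : 0 ≤ a) (hab : a < b) : cbrt a < cbrt b := by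
  rcases ha.eq_or_lt with h | h
  · rw [← h, cbrt_zero]; exact cbrt_pos (h ▸ hab)
  · rw [cbrt_of_pos h, cbrt_of_pos (h.trans hab)]
    exact Real.rpow_lt_rpow h.le hab (by norm_num)

lemma cbrt_eq_zero {y : ℝ} (h : cbrt y = 0) : y = 0 := by
  by_contra hy
  have habs : (0 : ℝ) < |y| := abs_pos.mpr hy
  have hp : 0 < |y| ^ ((1:ℝ)/3) := Real.rpow_pos_of_pos habs _
  have hsgn : Real.sign y ≠ 0 := fun hc => hy (Real.sign_eq_zero_iff.mp hc)
  exact (mul_ne_zero hsgn hp.ne') h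

lemma sum_neg {a s : ℝ} (ha : 0 < a) (hs : a ≤ s) :
    cbrt (-a + s) + cbrt (-a - s) < 0 := by
  have h1 : -a - s = -(a + s) := by ring
  rw [h1, cbrt_neg]
  have h2 : cbrt (-a + s) < cbrt (a + s) := cbrt_lt_cbrt (by linarith) (by linarith)
  linarith

lemma sum_pos' {a s : ℝ} (ha : a < 0) (hs : -a ≤ s) :
    0 < cbrt (-a + s) + cbrt (-a - s) := by
  have h1 : -a - s = -(a + s) := by ring
  rw [h1, cbrt_neg]
  have h2 : cbrt (a + s) < cbrt (-a + s) := cbrt_lt_cbrt (by linarith) (by linarith)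
  linarith

theorem stmt_8 (m e : ℝ) (hm : 0 < m) (he : 0 < e) :
    ∀ x ∈ Set.Icc (-1 : ℝ) 1,
      x * (cbrt (1 - x ^ 2) * cbrt (-m * x + Real.sqrt (m ^ 2 * x ^ 2 + e ^ 3 * (1 - x ^ 2) / 27))
          + cbrt (1 - x ^ 2) * cbrt (-m * x - Real.sqrt (m ^ 2 * x ^ 2 + e ^ 3 * (1 - x ^ 2) / 27)))
        ≤ 0 ∧
      (x * (cbrt (1 - x ^ 2) * cbrt (-m * x + Real.sqrt (m ^ 2 * x ^ 2 + e ^ 3 * (1 - x ^ 2) / 27))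
          + cbrt (1 - x ^ 2) * cbrt (-m * x - Real.sqrt (m ^ 2 * x ^ 2 + e ^ 3 * (1 - x ^ 2) / 27)))
        = 0 ↔ x = -1 ∨ x = 0 ∨ x = 1) := by
  rintro x ⟨hx1, hx2⟩
  have hD : 0 ≤ 1 - x ^ 2 := by nlinarith
  set S := Real.sqrt (m ^ 2 * x ^ 2 + e ^ 3 * (1 - x ^ 2) / 27) with hS
  have he3 : 0 < e ^ 3 := pow_pos he 3
  have hR : (m * x) ^ 2 ≤ m ^ 2 * x ^ 2 + e ^ 3 * (1 - x ^ 2) / 27 := by nlinarith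
  have habs : |m * x| ≤ S := by
    rw [← Real.sqrt_sq_eq_abs]; exact Real.sqrt_le_sqrt hR
  have hmn : -m * x = -(m * x) := by ring
  set A := cbrt (1 - x ^ 2) with hA
  have hA0 : 0 ≤ A := cbrt_nonneg hD
  rcases lt_trichotomy x 0 with hx | hx | hx
  · -- x < 0
    have ha : m * x < 0 := mul_neg_of_pos_of_neg hm hx
    have hs' : -(m * x) ≤ S := le_trans (neg_le_abs _) habs
    have hsum : 0 < cbrt (-m * x + S) + cbrt (-m * x - S) := by
      rw [hmn]; exact sum_pos' ha hs'
    constructor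
    · nlinarith [mul_nonneg (neg_nonneg.mpr hx.le) hA0]
    · constructor
      · intro h
        left
        have hfac : x * (A * (cbrt (-m * x + S) + cbrt (-m * x - S))) = 0 := by
          rw [mul_add]; exact h
        rcases mul_eq_zero.mp hfac with h0 | h0
        · exact absurd h0 hx.ne
        rcases mul_eq_zero.mp h0 with h0 | h0
        · have := cbrt_eq_zero h0
          nlinarith
        · exact absurd h0 hsum.ne'
      · rintro (rfl | rfl | rfl)
        · norm_num [cbrt_zero] at hA ⊢
          rw [hA]; ring
        · exact absurd rfl hx.ne
        · exact absurd hx (by norm_num)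
  · -- x = 0
    subst hx
    refine ⟨by norm_num, by norm_num⟩
  · -- x > 0
    have ha : 0 < m * x := mul_pos hm hx
    have hs' : m * x ≤ S := le_trans (le_abs_self _) habs
    have hsum : cbrt (-m * x + S) + cbrt (-m * x - S) < 0 := by
      rw [hmn]; exact sum_neg ha hs'
    constructor
    · nlinarith [mul_nonneg hx.le hA0]
    · constructor
      · intro h
        right; right
        have hfac : x * (A * (cbrt (-m * x + S) + cbrt (-m * x - S))) = 0 := by
          rw [mul_add]; exact h
        rcases mul_eq_zero.mp hfac with h0 | h0
        · exact absurd h0 hx.ne'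
        rcases mul_eq_zero.mp h0 with h0 | h0
        · have := cbrt_eq_zero h0
          nlinarith
        · exact absurd h0 hsum.ne
      · rintro (rfl | rfl | rfl)
        · exact absurd hx (by norm_num)
        · exact absurd rfl hx.ne'
        · norm_num [cbrt_zero] at hA ⊢
          rw [hA]; ring
end

section
/- Let L be a triangulation of the 2-simplex whose only boundary vertices are the 3 original vertices, with m interior vertices. Then L has exactly 3(m+1) edges and 2m+1 two-dimensional faces. Moreover, if e denotes the number of edges with one endpoint on the boundary and one in the interior, then e ≤ min(2m+1, 3m), and e=3m forces e=3 and m=1. -/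
open Finset

private lemma dcount {α β : Type*} (s : Finset α) (t : Finset β) (r : α → β → Prop)
    [∀ a b, Decidable (r a b)] :
    ∑ a ∈ s, (t.filter (fun b => r a b)).card
      = ∑ b ∈ t, (s.filter (fun a => r a b)).card := by
  simp only [card_filter]
  exact Finset.sum_comm

private lemma pair_inter_one {V : Type*} [DecidableEq V] {B : Finset V} {x y : V}
    (hx : x ∈ B) (hy : y ∉ B) : (({x, y} : Finset V) ∩ B).card = 1 := by
  have : ({x, y} : Finset V) ∩ B = {x} := by
    rw [show ({x,y} : Finset V) = insert x {y} from rfl, insert_inter_of_mem hx,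
      singleton_inter_of_notMem hy, insert_empty_eq]
  rw [this, card_singleton]

private lemma pair_inter_two {V : Type*} [DecidableEq V] {B : Finset V} {x y : V}
    (hx : x ∈ B) (hy : y ∈ B) (hxy : x ≠ y) : (({x, y} : Finset V) ∩ B).card = 2 := by
  have : ({x, y} : Finset V) ∩ B = {x, y} := by
    rw [inter_eq_left]
    exact insert_subset hx (singleton_subset_iff.mpr hy)
  rw [this, card_pair hxy]

private lemma pair_inter_zero {V : Type*} [DecidableEq V] {B : Finset V} {x y : V}
    (hx : x ∉ B) (hy : y ∉ B) : (({x, y} : Finset V) ∩ B).card = 0 := by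
  have : ({x, y} : Finset V) ∩ B = ∅ := by
    rw [show ({x,y} : Finset V) = insert x {y} from rfl, insert_inter_of_notMem hx,
      singleton_inter_of_notMem hy]
  rw [this, card_empty]

private lemma subsets_eq {V : Type*} [DecidableEq V] (K : Finset (Finset V))
    (hdown : ∀ σ ∈ K, ∀ τ ⊆ σ, τ.Nonempty → τ ∈ K)
    (τ : Finset V) (hτK : τ ∈ K) (P : Finset V → Prop) [DecidablePred P] :
    (K.filter (fun σ => σ.card = 2)).filter (fun σ => P σ ∧ σ ⊆ τ)
      = (τ.powersetCard 2).filter P := by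
  ext σ
  simp only [mem_filter, mem_powersetCard]
  constructor
  · rintro ⟨⟨hK, h2⟩, hP, hsub⟩
    exact ⟨⟨hsub, h2⟩, hP⟩
  · rintro ⟨⟨hsub, h2⟩, hP⟩
    refine ⟨⟨hdown τ hτK σ hsub ?_, h2⟩, hP, hsub⟩
    rw [← card_pos, h2]; norm_num

private lemma mem_pc2 {V : Type*} [DecidableEq V] {τ : Finset V} {a b : V}
    (ha : a ∈ τ) (hb : b ∈ τ) (hab : a ≠ b) : ({a, b} : Finset V) ∈ τ.powersetCard 2 :=
  mem_powersetCard.mpr ⟨insert_subset ha (singleton_subset_iff.mpr hb), card_pair hab⟩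

private lemma triangle_mixed_le {V : Type*} [DecidableEq V] (B τ : Finset V)
    (h3 : τ.card = 3) :
    ((τ.powersetCard 2).filter (fun σ => (σ ∩ B).card = 1)).card ≤ 2 := by
  by_contra h
  push_neg at h
  have hcards : (τ.powersetCard 2).card = 3 := by rw [card_powersetCard, h3]; rfl
  have heq : (τ.powersetCard 2).filter (fun σ => (σ ∩ B).card = 1) = τ.powersetCard 2 :=
    eq_of_subset_of_card_le (filter_subset _ _) (by omega)
  have hall : ∀ σ ∈ τ.powersetCard 2, (σ ∩ B).card = 1 := by
    intro σ hσ
    rw [← heq] at hσ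
    exact (mem_filter.mp hσ).2
  obtain ⟨x, y, z, hxy, hxz, hyz, rfl⟩ := card_eq_three.mp h3
  have hx' : x ∈ ({x, y, z} : Finset V) := by simp
  have hy' : y ∈ ({x, y, z} : Finset V) := by simp
  have hz' : z ∈ ({x, y, z} : Finset V) := by simp
  have h1 := hall {x, y} (mem_pc2 hx' hy' hxy)
  have h2 := hall {x, z} (mem_pc2 hx' hz' hxz)
  have h3' := hall {y, z} (mem_pc2 hy' hz' hyz)
  by_cases hx : x ∈ B
  · have hy : y ∉ B := by
      intro hy; rw [pair_inter_two hx hy hxy] at h1; omega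
    have hz : z ∉ B := by
      intro hz; rw [pair_inter_two hx hz hxz] at h2; omega
    rw [pair_inter_zero hy hz] at h3'; omega
  · have hy : y ∈ B := by
      by_contra hy; rw [pair_inter_zero hx hy] at h1; omega
    have hz : z ∈ B := by
      by_contra hz; rw [pair_inter_zero hx hz] at h2; omega
    rw [pair_inter_two hy hz hyz] at h3'; omega

private lemma two_in {V : Type*} [DecidableEq V] {B τ : Finset V} {a b w : V}
    (hab : a ≠ b) (haw : a ≠ w) (hbw : b ≠ w)
    (ha : a ∈ B) (hb : b ∈ B) (hw : w ∉ B)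
    (hat : a ∈ τ) (hbt : b ∈ τ) (hwt : w ∈ τ) :
    2 ≤ ((τ.powersetCard 2).filter (fun σ => (σ ∩ B).card = 1)).card := by
  have hne : ({a, w} : Finset V) ≠ {b, w} := by
    intro h
    have : a ∈ ({b, w} : Finset V) := h ▸ (by simp : a ∈ ({a, w} : Finset V))
    simp at this
    tauto
  have hsub : ({({a, w} : Finset V), {b, w}} : Finset (Finset V))
      ⊆ (τ.powersetCard 2).filter (fun σ => (σ ∩ B).card = 1) := by
    intro σ hσ
    simp only [mem_insert, mem_singleton] at hσ
    rcases hσ with rfl | rfl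
    · exact mem_filter.mpr ⟨mem_pc2 hat hwt haw, pair_inter_one ha hw⟩
    · exact mem_filter.mpr ⟨mem_pc2 hbt hwt hbw, pair_inter_one hb hw⟩
  calc 2 = ({({a, w} : Finset V), {b, w}} : Finset (Finset V)).card := (card_pair hne).symm
    _ ≤ _ := card_le_card hsub

private lemma triangle_mixed_ge {V : Type*} [DecidableEq V] {B τ : Finset V}
    (h3 : τ.card = 3) (hnB : ¬ τ ⊆ B)
    (hno : ∀ σ ∈ τ.powersetCard 2, (σ ∩ B).card ≠ 0) :
    2 ≤ ((τ.powersetCard 2).filter (fun σ => (σ ∩ B).card = 1)).card := by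
  obtain ⟨x, y, z, hxy, hxz, hyz, rfl⟩ := card_eq_three.mp h3
  have hx' : x ∈ ({x, y, z} : Finset V) := by simp
  have hy' : y ∈ ({x, y, z} : Finset V) := by simp
  have hz' : z ∈ ({x, y, z} : Finset V) := by simp
  by_cases hx : x ∈ B
  · by_cases hy : y ∈ B
    · by_cases hz : z ∈ B
      · exact absurd (insert_subset hx (insert_subset hy (singleton_subset_iff.mpr hz))) hnB
      · exact two_in hxy hxz hyz hx hy hz hx' hy' hz'
    · by_cases hz : z ∈ B
      · exact two_in hxz hxy (Ne.symm hyz) hx hz hy hx' hz' hy'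
      · exact absurd (pair_inter_zero hy hz) (hno _ (mem_pc2 hy' hz' hyz))
  · by_cases hy : y ∈ B
    · by_cases hz : z ∈ B
      · exact two_in hyz hxy.symm hxz.symm hy hz hx hy' hz' hx'
      · exact absurd (pair_inter_zero hx hz) (hno _ (mem_pc2 hx' hz' hxz))
    · exact absurd (pair_inter_zero hx hy) (hno _ (mem_pc2 hx' hy' hxy))

private lemma subsets_eq' {V : Type*} [DecidableEq V] (K : Finset (Finset V))
    (hdown : ∀ σ ∈ K, ∀ τ ⊆ σ, τ.Nonempty → τ ∈ K)
    (τ : Finset V) (hτK : τ ∈ K) :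
    (K.filter (fun σ => σ.card = 2)).filter (fun σ => σ ⊆ τ) = τ.powersetCard 2 := by
  ext σ
  simp only [mem_filter, mem_powersetCard]
  constructor
  · rintro ⟨⟨hK, h2⟩, hsub⟩
    exact ⟨hsub, h2⟩
  · rintro ⟨hsub, h2⟩
    refine ⟨⟨hdown τ hτK σ hsub ?_, h2⟩, hsub⟩
    rw [← card_pos, h2]; norm_num

/-- A combinatorial triangulation of the 2-simplex with boundary vertex set `B`
(no new vertices on the boundary): `K` is the set of (nonempty) faces. -/
theorem stmt_9 {V : Type*} [Fintype V] [DecidableEq V]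
    (K : Finset (Finset V)) (B : Finset V)
    (hB : B.card = 3)
    (hBnot : B ∉ K)
    (hne : ∀ σ ∈ K, σ.Nonempty)
    (hdim : ∀ σ ∈ K, σ.card ≤ 3)
    (hdown : ∀ σ ∈ K, ∀ τ ⊆ σ, τ.Nonempty → τ ∈ K)
    (hvert : ∀ v : V, {v} ∈ K)
    (hbedge : ∀ σ ⊆ B, σ.card = 2 → σ ∈ K)
    (hlink : ∀ σ ∈ K, σ.card = 2 →
      (K.filter (fun τ => τ.card = 3 ∧ σ ⊆ τ)).card = if σ ⊆ B then 1 else 2)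
    (heuler : (Fintype.card V : ℤ)
        - ((K.filter (fun σ => σ.card = 2)).card : ℤ)
        + ((K.filter (fun σ => σ.card = 3)).card : ℤ) = 1)
    (m : ℕ) (hm : m = Fintype.card V - B.card) (hm1 : 1 ≤ m)
    (e : ℕ) (he : e = (K.filter (fun σ => σ.card = 2 ∧ (σ ∩ B).card = 1)).card) :
    (K.filter (fun σ => σ.card = 2)).card = 3 * (m + 1) ∧
    (K.filter (fun σ => σ.card = 3)).card = 2 * m + 1 ∧
    e ≤ 2 * m + 1 ∧ e ≤ 3 * m ∧ (e = 3 * m → e = 3 ∧ m = 1) := by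
  classical
  set E2 := K.filter (fun σ => σ.card = 2) with hE2
  set E3 := K.filter (fun σ => σ.card = 3) with hE3
  have hE3mem : ∀ τ ∈ E3, τ ∈ K ∧ τ.card = 3 := by
    intro τ hτ; rw [hE3, mem_filter] at hτ; exact hτ
  -- link counts
  have hlink' : ∀ σ ∈ E2, (E3.filter (fun τ => σ ⊆ τ)).card = if σ ⊆ B then 1 else 2 := by
    intro σ hσ
    rw [hE2, mem_filter] at hσ
    rw [hE3, filter_filter]
    exact hlink σ hσ.1 hσ.2
  -- first double count
  have hdc1 : ∑ σ ∈ E2, (E3.filter (fun τ => σ ⊆ τ)).card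
      = ∑ τ ∈ E3, (E2.filter (fun σ => σ ⊆ τ)).card := dcount E2 E3 (fun σ τ => σ ⊆ τ)
  have hsum1 : ∑ σ ∈ E2, (if σ ⊆ B then 1 else 2) = 3 * E3.card := by
    rw [← Finset.sum_congr rfl hlink', hdc1]
    have h3 : ∀ τ ∈ E3, (E2.filter (fun σ => σ ⊆ τ)).card = 3 := by
      intro τ hτ
      obtain ⟨hτK, hτ3⟩ := hE3mem τ hτ
      rw [hE2, subsets_eq' K hdown τ hτK, card_powersetCard, hτ3]; rfl
    rw [Finset.sum_congr rfl h3, Finset.sum_const, smul_eq_mul, mul_comm]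
  -- boundary edges
  have hbd : E2.filter (fun σ => σ ⊆ B) = B.powersetCard 2 := by
    ext σ
    rw [hE2]
    simp only [mem_filter, mem_powersetCard]
    constructor
    · rintro ⟨⟨_, h2⟩, hsub⟩; exact ⟨hsub, h2⟩
    · rintro ⟨hsub, h2⟩; exact ⟨⟨hbedge σ hsub h2, h2⟩, hsub⟩
  have hbd3 : (E2.filter (fun σ => σ ⊆ B)).card = 3 := by
    rw [hbd, card_powersetCard, hB]; rfl
  -- evaluate LHS of double count
  have hLHS : (∑ σ ∈ E2, (if σ ⊆ B then 1 else 2)) + (E2.filter (fun σ => σ ⊆ B)).card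
      = 2 * E2.card := by
    rw [card_filter, ← Finset.sum_add_distrib]
    have hpt : ∀ σ ∈ E2, ((if σ ⊆ B then 1 else 2) + (if σ ⊆ B then 1 else 0)) = 2 := by
      intro σ _; split_ifs <;> rfl
    rw [Finset.sum_congr rfl hpt, Finset.sum_const, smul_eq_mul, mul_comm]
  have hkey : 3 * E3.card + 3 = 2 * E2.card := by omega
  -- vertex count
  have hn : Fintype.card V = m + 3 := by
    have hle : B.card ≤ Fintype.card V := Finset.card_le_univ B
    omega
  have hEcard : E2.card = 3 * (m + 1) ∧ E3.card = 2 * m + 1 := by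
    constructor <;> omega
  -- partition of edges by boundary intersection
  have hc2 : ∀ σ ∈ E2, (σ ∩ B).card ≤ 2 := by
    intro σ hσ; rw [hE2, mem_filter] at hσ
    calc (σ ∩ B).card ≤ σ.card := card_le_card inter_subset_left
      _ = 2 := hσ.2
  have hiff : ∀ σ ∈ E2, ((σ ∩ B).card = 2 ↔ σ ⊆ B) := by
    intro σ hσ; rw [hE2, mem_filter] at hσ
    constructor
    · intro h
      have heq : σ ∩ B = σ :=
        eq_of_subset_of_card_le inter_subset_left (by omega)
      rw [← heq]; exact inter_subset_right
    · intro h; rw [inter_eq_left.mpr h, hσ.2]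
  have he' : (E2.filter (fun σ => (σ ∩ B).card = 1)).card = e := by
    rw [he, hE2, filter_filter]
  set i := (E2.filter (fun σ => (σ ∩ B).card = 0)).card with hi
  have hpart : E2.card = i + e + 3 := by
    have hsum : E2.card = ∑ σ ∈ E2, ((if (σ ∩ B).card = 0 then 1 else 0)
        + ((if (σ ∩ B).card = 1 then 1 else 0) + (if (σ ∩ B).card = 2 then 1 else 0))) := by
      rw [card_eq_sum_ones]
      refine Finset.sum_congr rfl fun σ hσ => ?_
      have := hc2 σ hσ
      split_ifs <;> omega
    rw [Finset.sum_add_distrib, Finset.sum_add_distrib, ← card_filter, ← card_filter,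
      ← card_filter] at hsum
    have hb2 : (E2.filter (fun σ => (σ ∩ B).card = 2)).card = 3 := by
      rw [filter_congr hiff, hbd3]
    omega
  -- mixed edge double count
  have hmix : ∑ σ ∈ E2.filter (fun σ => (σ ∩ B).card = 1), (E3.filter (fun τ => σ ⊆ τ)).card
      = ∑ τ ∈ E3, ((E2.filter (fun σ => (σ ∩ B).card = 1)).filter (fun σ => σ ⊆ τ)).card :=
    dcount _ _ _
  have hmixL : ∑ σ ∈ E2.filter (fun σ => (σ ∩ B).card = 1), (E3.filter (fun τ => σ ⊆ τ)).card
      = 2 * e := by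
    have hpt : ∀ σ ∈ E2.filter (fun σ => (σ ∩ B).card = 1),
        (E3.filter (fun τ => σ ⊆ τ)).card = 2 := by
      intro σ hσ
      rw [mem_filter] at hσ
      rw [hlink' σ hσ.1, if_neg]
      intro hsub
      have := (hiff σ hσ.1).mpr hsub
      omega
    rw [Finset.sum_congr rfl hpt, Finset.sum_const, smul_eq_mul, he', mul_comm]
  have hmixfil : ∀ τ ∈ E3, (E2.filter (fun σ => (σ ∩ B).card = 1)).filter (fun σ => σ ⊆ τ)
      = (τ.powersetCard 2).filter (fun σ => (σ ∩ B).card = 1) := by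
    intro τ hτ
    obtain ⟨hτK, hτ3⟩ := hE3mem τ hτ
    rw [filter_filter, hE2, subsets_eq K hdown τ hτK (fun σ => (σ ∩ B).card = 1)]
  have hele : 2 * e ≤ 2 * E3.card := by
    rw [← hmixL, hmix]
    calc ∑ τ ∈ E3, ((E2.filter (fun σ => (σ ∩ B).card = 1)).filter (fun σ => σ ⊆ τ)).card
        ≤ ∑ τ ∈ E3, 2 := by
          refine Finset.sum_le_sum fun τ hτ => ?_
          rw [hmixfil τ hτ]
          exact triangle_mixed_le B τ (hE3mem τ hτ).2
      _ = 2 * E3.card := by rw [Finset.sum_const, smul_eq_mul, mul_comm]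
  refine ⟨hEcard.1, hEcard.2, by omega, by omega, fun heq => ?_⟩
  -- equality case
  have hi0 : i = 0 := by omega
  have hiempty : E2.filter (fun σ => (σ ∩ B).card = 0) = ∅ := card_eq_zero.mp hi0
  have hno : ∀ τ ∈ E3, ∀ σ ∈ τ.powersetCard 2, (σ ∩ B).card ≠ 0 := by
    intro τ hτ σ hσ h0
    obtain ⟨hτK, hτ3⟩ := hE3mem τ hτ
    have hmem : σ ∈ (τ.powersetCard 2).filter (fun σ => (σ ∩ B).card = 0) :=
      mem_filter.mpr ⟨hσ, h0⟩
    rw [← subsets_eq K hdown τ hτK (fun σ => (σ ∩ B).card = 0)] at hmem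
    have hmem' := mem_filter.mp hmem
    have : σ ∈ E2.filter (fun σ => (σ ∩ B).card = 0) := by
      rw [hE2]
      exact mem_filter.mpr ⟨hmem'.1, hmem'.2.1⟩
    rw [hiempty] at this
    exact notMem_empty σ this
  have hnotsub : ∀ τ ∈ E3, ¬ τ ⊆ B := by
    intro τ hτ hsub
    obtain ⟨hτK, hτ3⟩ := hE3mem τ hτ
    have : τ = B := eq_of_subset_of_card_le hsub (by rw [hB, hτ3])
    exact hBnot (this ▸ hτK)
  have hege : 2 * E3.card ≤ 2 * e := by
    rw [← hmixL, hmix]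
    calc (2 : ℕ) * E3.card = ∑ τ ∈ E3, 2 := by rw [Finset.sum_const, smul_eq_mul, mul_comm]
      _ ≤ _ := by
          refine Finset.sum_le_sum fun τ hτ => ?_
          rw [hmixfil τ hτ]
          exact triangle_mixed_ge (hE3mem τ hτ).2 (hnotsub τ hτ) (hno τ hτ)
  constructor <;> omega
end

section
/- Let L be a triangulation of the 2-simplex with only original vertices on the boundary, m interior vertices, and e edges of type (1,1) (one endpoint on the boundary, one in the interior). Then: exactly 3 edges have both endpoints on the boundary, 3m−e edges have both endpoints in the interior; exactly 3 triangles have 2 boundary and 1 interior vertex, e−3 triangles have 1 boundary and 2 interior vertices, and 2m+1−e triangles have all 3 vertices in the interior. -/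
open Finset

-- double counting
private lemma dc10 {α : Type*} [DecidableEq α] (S T : Finset (Finset α)) :
    ∑ σ ∈ S, (T.filter (fun τ => σ ⊆ τ)).card
      = ∑ τ ∈ T, (S.filter (fun σ => σ ⊆ τ)).card := by
  simp only [Finset.card_filter]
  rw [Finset.sum_comm]

-- fiber card for type (1,1) edges inside a face τ
private lemma fiber11 {α : Type*} [DecidableEq α] (B : Finset α) (K : Finset (Finset α))
    (hdown : ∀ σ ∈ K, ∀ ρ ⊆ σ, ρ.Nonempty → ρ ∈ K) (τ : Finset α) (hτK : τ ∈ K) :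
    (K.filter (fun σ => (σ.card = 2 ∧ (σ ∩ B).card = 1) ∧ σ ⊆ τ)).card
      = (τ ∩ B).card * (τ \ B).card := by
  rw [← Finset.card_product]
  refine (Finset.card_bij (fun p _ => ({p.1, p.2} : Finset α)) ?_ ?_ ?_).symm
  · rintro ⟨a, b⟩ hp
    rw [Finset.mem_product] at hp
    obtain ⟨ha, hb⟩ := hp
    simp only [Finset.mem_inter] at ha
    simp only [Finset.mem_sdiff] at hb
    have hab : a ≠ b := fun h => hb.2 (h ▸ ha.2)
    have hsub : ({a, b} : Finset α) ⊆ τ := by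
      intro x hx
      simp only [Finset.mem_insert, Finset.mem_singleton] at hx
      rcases hx with rfl | rfl
      · exact ha.1
      · exact hb.1
    have hinter : ({a, b} : Finset α) ∩ B = {a} := by
      ext x
      simp only [Finset.mem_inter, Finset.mem_insert, Finset.mem_singleton]
      constructor
      · rintro ⟨rfl | rfl, hxB⟩
        · rfl
        · exact absurd hxB hb.2
      · rintro rfl; exact ⟨Or.inl rfl, ha.2⟩
    refine Finset.mem_filter.mpr ⟨hdown τ hτK _ hsub ⟨a, by simp⟩, ⟨?_, ?_⟩, hsub⟩
    · exact Finset.card_pair hab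
    · rw [hinter, Finset.card_singleton]
  · rintro ⟨a, b⟩ hp ⟨a', b'⟩ hp' heq
    rw [Finset.mem_product] at hp hp'
    simp only [Finset.mem_inter] at hp hp'
    simp only [Finset.mem_sdiff] at hp hp'
    have haB : a ∈ B := hp.1.2
    have ha'B : a' ∈ B := hp'.1.2
    have hbB : b ∉ B := hp.2.2
    have hb'B : b' ∉ B := hp'.2.2
    dsimp only at heq
    have ha : a ∈ ({a', b'} : Finset α) := by rw [← heq]; simp
    have hb : b ∈ ({a', b'} : Finset α) := by rw [← heq]; simp
    simp only [Finset.mem_insert, Finset.mem_singleton] at ha hb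
    have haa : a = a' := by
      rcases ha with h | h
      · exact h
      · exact absurd (h ▸ haB) hb'B
    have hbb : b = b' := by
      rcases hb with h | h
      · exact absurd ha'B (h ▸ hbB)
      · exact h
    simp [haa, hbb]
  · intro σ hσ
    rw [Finset.mem_filter] at hσ
    obtain ⟨hσK, ⟨h2, h1⟩, hsubτ⟩ := hσ
    obtain ⟨a, ha⟩ := Finset.card_eq_one.mp h1
    have hsd : (σ \ B).card = 1 := by
      have := Finset.card_sdiff_add_card_inter σ B
      omega
    obtain ⟨b, hb⟩ := Finset.card_eq_one.mp hsd
    have hiu : (σ ∩ B) ∪ (σ \ B) = σ := by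
      ext x; simp only [Finset.mem_union, Finset.mem_inter, Finset.mem_sdiff]; tauto
    have hσab : σ = {a, b} := by
      rw [← hiu, ha, hb]; rfl
    have haσ : a ∈ σ ∩ B := ha ▸ Finset.mem_singleton_self a
    have hbσ : b ∈ σ \ B := hb ▸ Finset.mem_singleton_self b
    rw [Finset.mem_inter] at haσ
    rw [Finset.mem_sdiff] at hbσ
    refine ⟨(a, b), Finset.mem_product.mpr ⟨?_, ?_⟩, hσab.symm⟩
    · exact Finset.mem_inter.mpr ⟨hsubτ haσ.1, haσ.2⟩
    · exact Finset.mem_sdiff.mpr ⟨hsubτ hbσ.1, hbσ.2⟩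
/-- Refined face count by type `(i,j)` (`i` boundary vertices, `j` interior vertices)
for a combinatorial triangulation of the 2-simplex with boundary vertex set `B`
(no new vertices on the boundary): `K` is the set of (nonempty) faces. -/
theorem stmt_10 {V : Type*} [Fintype V] [DecidableEq V]
    (K : Finset (Finset V)) (B : Finset V)
    (hB : B.card = 3)
    (hBnot : B ∉ K)
    (hne : ∀ σ ∈ K, σ.Nonempty)
    (hdim : ∀ σ ∈ K, σ.card ≤ 3)
    (hdown : ∀ σ ∈ K, ∀ τ ⊆ σ, τ.Nonempty → τ ∈ K)
    (hvert : ∀ v : V, {v} ∈ K)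
    (hbedge : ∀ σ ⊆ B, σ.card = 2 → σ ∈ K)
    (hlink : ∀ σ ∈ K, σ.card = 2 →
      (K.filter (fun τ => τ.card = 3 ∧ σ ⊆ τ)).card = if σ ⊆ B then 1 else 2)
    (heuler : (Fintype.card V : ℤ)
        - ((K.filter (fun σ => σ.card = 2)).card : ℤ)
        + ((K.filter (fun σ => σ.card = 3)).card : ℤ) = 1)
    (m : ℕ) (hm : m = Fintype.card V - B.card) (hm1 : 1 ≤ m)
    (e : ℕ) (he : e = (K.filter (fun σ => σ.card = 2 ∧ (σ ∩ B).card = 1)).card) :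
    (K.filter (fun σ => σ.card = 2 ∧ (σ ∩ B).card = 2)).card = 3 ∧
    ((K.filter (fun σ => σ.card = 2 ∧ (σ ∩ B).card = 0)).card : ℤ) = 3 * m - e ∧
    (K.filter (fun σ => σ.card = 3 ∧ (σ ∩ B).card = 2)).card = 3 ∧
    ((K.filter (fun σ => σ.card = 3 ∧ (σ ∩ B).card = 1)).card : ℤ) = e - 3 ∧
    ((K.filter (fun σ => σ.card = 3 ∧ (σ ∩ B).card = 0)).card : ℤ) = 2 * m + 1 - e := by
  classical
  have hBV : B.card ≤ Fintype.card V := by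
    simpa using Finset.card_le_card (Finset.subset_univ B)
  have hV : Fintype.card V = m + 3 := by omega
  have hsubB : ∀ σ : Finset V, σ.card = 2 → ((σ ∩ B).card = 2 ↔ σ ⊆ B) := by
    intro σ h2
    constructor
    · intro hi
      have h : σ ∩ B = σ :=
        Finset.eq_of_subset_of_card_le Finset.inter_subset_left (by omega)
      exact Finset.inter_eq_left.mp h
    · intro hs
      rw [Finset.inter_eq_left.mpr hs, h2]
  -- (A) boundary edges
  have hAcard : (K.filter (fun σ => σ.card = 2 ∧ (σ ∩ B).card = 2)).card = 3 := by
    have hA : K.filter (fun σ => σ.card = 2 ∧ (σ ∩ B).card = 2) = B.powersetCard 2 := by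
      ext σ
      simp only [Finset.mem_filter, Finset.mem_powersetCard]
      constructor
      · rintro ⟨hK, h2, hi⟩
        exact ⟨(hsubB σ h2).mp hi, h2⟩
      · rintro ⟨hs, h2⟩
        exact ⟨hbedge σ hs h2, h2, (hsubB σ h2).mpr hs⟩
    rw [hA, Finset.card_powersetCard, hB]
    rfl
  -- fiberwise sums over triangles
  have hmapT : ∀ τ ∈ K.filter (fun σ => σ.card = 3), (τ ∩ B).card ∈ Finset.range 4 := by
    intro τ hτ
    rw [Finset.mem_filter] at hτ
    have h : (τ ∩ B).card ≤ τ.card := Finset.card_le_card Finset.inter_subset_left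
    rw [Finset.mem_range]; omega
  have hT3 : (K.filter (fun σ => σ.card = 3)).filter (fun τ => (τ ∩ B).card = 3) = ∅ := by
    rw [Finset.filter_filter, Finset.filter_eq_empty_iff]
    rintro σ hσ ⟨h3, hi3⟩
    have h1 : σ ∩ B = B :=
      Finset.eq_of_subset_of_card_le Finset.inter_subset_right (by omega)
    have h2 : σ ∩ B = σ :=
      Finset.eq_of_subset_of_card_le Finset.inter_subset_left (by omega)
    rw [← h2, h1] at hσ
    exact hBnot hσ
  have keyT : ∀ g : ℕ → ℕ,
      ∑ τ ∈ K.filter (fun σ => σ.card = 3), g ((τ ∩ B).card)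
        = g 0 * (K.filter (fun σ => σ.card = 3 ∧ (σ ∩ B).card = 0)).card
          + g 1 * (K.filter (fun σ => σ.card = 3 ∧ (σ ∩ B).card = 1)).card
          + g 2 * (K.filter (fun σ => σ.card = 3 ∧ (σ ∩ B).card = 2)).card := by
    intro g
    rw [← Finset.sum_fiberwise_of_maps_to hmapT (fun τ => g ((τ ∩ B).card))]
    rw [Finset.sum_range_succ, Finset.sum_range_succ, Finset.sum_range_succ,
      Finset.sum_range_succ, Finset.sum_range_zero, hT3, Finset.sum_empty]
    have hj : ∀ j : ℕ,
        ∑ τ ∈ (K.filter (fun σ => σ.card = 3)).filter (fun τ => (τ ∩ B).card = j),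
            g ((τ ∩ B).card)
          = g j * (K.filter (fun σ => σ.card = 3 ∧ (σ ∩ B).card = j)).card := by
      intro j
      have h1 : ∑ τ ∈ (K.filter (fun σ => σ.card = 3)).filter (fun τ => (τ ∩ B).card = j),
          g ((τ ∩ B).card)
          = ∑ τ ∈ (K.filter (fun σ => σ.card = 3)).filter (fun τ => (τ ∩ B).card = j), g j :=
        Finset.sum_congr rfl (fun τ hτ => by rw [(Finset.mem_filter.mp hτ).2])
      rw [h1, Finset.sum_const, Finset.filter_filter, smul_eq_mul, mul_comm]
    rw [hj 0, hj 1, hj 2]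
    ring
  -- fiberwise sums over edges
  have hmapE : ∀ σ ∈ K.filter (fun σ => σ.card = 2), (σ ∩ B).card ∈ Finset.range 3 := by
    intro τ hτ
    rw [Finset.mem_filter] at hτ
    have h : (τ ∩ B).card ≤ τ.card := Finset.card_le_card Finset.inter_subset_left
    rw [Finset.mem_range]; omega
  have keyE : ∀ g : ℕ → ℕ,
      ∑ σ ∈ K.filter (fun σ => σ.card = 2), g ((σ ∩ B).card)
        = g 0 * (K.filter (fun σ => σ.card = 2 ∧ (σ ∩ B).card = 0)).card
          + g 1 * (K.filter (fun σ => σ.card = 2 ∧ (σ ∩ B).card = 1)).card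
          + g 2 * (K.filter (fun σ => σ.card = 2 ∧ (σ ∩ B).card = 2)).card := by
    intro g
    rw [← Finset.sum_fiberwise_of_maps_to hmapE (fun σ => g ((σ ∩ B).card))]
    rw [Finset.sum_range_succ, Finset.sum_range_succ, Finset.sum_range_succ,
      Finset.sum_range_zero]
    have hj : ∀ j : ℕ,
        ∑ τ ∈ (K.filter (fun σ => σ.card = 2)).filter (fun τ => (τ ∩ B).card = j),
            g ((τ ∩ B).card)
          = g j * (K.filter (fun σ => σ.card = 2 ∧ (σ ∩ B).card = j)).card := by
      intro j
      have h1 : ∑ τ ∈ (K.filter (fun σ => σ.card = 2)).filter (fun τ => (τ ∩ B).card = j),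
          g ((τ ∩ B).card)
          = ∑ τ ∈ (K.filter (fun σ => σ.card = 2)).filter (fun τ => (τ ∩ B).card = j), g j :=
        Finset.sum_congr rfl (fun τ hτ => by rw [(Finset.mem_filter.mp hτ).2])
      rw [h1, Finset.sum_const, Finset.filter_filter, smul_eq_mul, mul_comm]
    rw [hj 0, hj 1, hj 2]
    ring
  -- total counts
  have hcardE : (K.filter (fun σ => σ.card = 2)).card
      = (K.filter (fun σ => σ.card = 2 ∧ (σ ∩ B).card = 0)).card
        + (K.filter (fun σ => σ.card = 2 ∧ (σ ∩ B).card = 1)).card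
        + (K.filter (fun σ => σ.card = 2 ∧ (σ ∩ B).card = 2)).card := by
    have h := keyE (fun _ => 1)
    simp only [one_mul] at h
    rw [Finset.card_eq_sum_ones]
    exact h
  have hcardT : (K.filter (fun σ => σ.card = 3)).card
      = (K.filter (fun σ => σ.card = 3 ∧ (σ ∩ B).card = 0)).card
        + (K.filter (fun σ => σ.card = 3 ∧ (σ ∩ B).card = 1)).card
        + (K.filter (fun σ => σ.card = 3 ∧ (σ ∩ B).card = 2)).card := by
    have h := keyT (fun _ => 1)
    simp only [one_mul] at h
    rw [Finset.card_eq_sum_ones]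
    exact h
  -- (B) type (2,1) triangles
  have hstepB : (K.filter (fun σ => σ.card = 2 ∧ (σ ∩ B).card = 2)).card
      = (K.filter (fun σ => σ.card = 3 ∧ (σ ∩ B).card = 2)).card := by
    have hdcB := dc10 (K.filter (fun σ => σ.card = 2 ∧ (σ ∩ B).card = 2))
      (K.filter (fun σ => σ.card = 3))
    have hL : ∑ σ ∈ K.filter (fun σ => σ.card = 2 ∧ (σ ∩ B).card = 2),
        ((K.filter (fun σ => σ.card = 3)).filter (fun τ => σ ⊆ τ)).card
        = ∑ σ ∈ K.filter (fun σ => σ.card = 2 ∧ (σ ∩ B).card = 2), 1 := by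
      refine Finset.sum_congr rfl fun σ hσ => ?_
      rw [Finset.mem_filter] at hσ
      obtain ⟨hK, h2, hi⟩ := hσ
      rw [Finset.filter_filter, hlink σ hK h2, if_pos ((hsubB σ h2).mp hi)]
    have hR : ∑ τ ∈ K.filter (fun σ => σ.card = 3),
        ((K.filter (fun σ => σ.card = 2 ∧ (σ ∩ B).card = 2)).filter (fun σ => σ ⊆ τ)).card
        = ∑ τ ∈ K.filter (fun σ => σ.card = 3), ((τ ∩ B).card).choose 2 := by
      refine Finset.sum_congr rfl fun τ hτ => ?_
      rw [Finset.filter_filter]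
      have hset : K.filter (fun σ => (σ.card = 2 ∧ (σ ∩ B).card = 2) ∧ σ ⊆ τ)
          = (τ ∩ B).powersetCard 2 := by
        ext σ
        simp only [Finset.mem_filter, Finset.mem_powersetCard]
        constructor
        · rintro ⟨hK, ⟨h2, hi⟩, hsub⟩
          exact ⟨Finset.subset_inter hsub ((hsubB σ h2).mp hi), h2⟩
        · rintro ⟨hsub, h2⟩
          have hsB : σ ⊆ B := hsub.trans Finset.inter_subset_right
          exact ⟨hbedge σ hsB h2, ⟨h2, (hsubB σ h2).mpr hsB⟩,
            hsub.trans Finset.inter_subset_left⟩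
      rw [hset, Finset.card_powersetCard]
    rw [hL, hR, keyT (fun k => k.choose 2), Finset.sum_const, smul_eq_mul, mul_one] at hdcB
    simpa using hdcB
  -- (C) type (1,2) triangles via (1,1) edges
  have hstepC : 2 * (K.filter (fun σ => σ.card = 2 ∧ (σ ∩ B).card = 1)).card
      = 2 * (K.filter (fun σ => σ.card = 3 ∧ (σ ∩ B).card = 1)).card
        + 2 * (K.filter (fun σ => σ.card = 3 ∧ (σ ∩ B).card = 2)).card := by
    have hdcC := dc10 (K.filter (fun σ => σ.card = 2 ∧ (σ ∩ B).card = 1))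
      (K.filter (fun σ => σ.card = 3))
    have hL : ∑ σ ∈ K.filter (fun σ => σ.card = 2 ∧ (σ ∩ B).card = 1),
        ((K.filter (fun σ => σ.card = 3)).filter (fun τ => σ ⊆ τ)).card
        = ∑ σ ∈ K.filter (fun σ => σ.card = 2 ∧ (σ ∩ B).card = 1), 2 := by
      refine Finset.sum_congr rfl fun σ hσ => ?_
      rw [Finset.mem_filter] at hσ
      obtain ⟨hK, h2, hi⟩ := hσ
      have hnB : ¬ σ ⊆ B := fun hs => by
        have := (hsubB σ h2).mpr hs
        omega
      rw [Finset.filter_filter, hlink σ hK h2, if_neg hnB]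
    have hR : ∑ τ ∈ K.filter (fun σ => σ.card = 3),
        ((K.filter (fun σ => σ.card = 2 ∧ (σ ∩ B).card = 1)).filter (fun σ => σ ⊆ τ)).card
        = ∑ τ ∈ K.filter (fun σ => σ.card = 3), (τ ∩ B).card * (3 - (τ ∩ B).card) := by
      refine Finset.sum_congr rfl fun τ hτ => ?_
      rw [Finset.mem_filter] at hτ
      obtain ⟨hτK, h3⟩ := hτ
      have hsd : (τ \ B).card = 3 - (τ ∩ B).card := by
        have h := Finset.card_sdiff_add_card_inter τ B
        omega
      rw [Finset.filter_filter, fiber11 B K hdown τ hτK, hsd]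
    rw [hL, hR, keyT (fun k => k * (3 - k)), Finset.sum_const, smul_eq_mul] at hdcC
    omega
  -- (E) all edge/triangle incidences
  have hstepE : 2 * (K.filter (fun σ => σ.card = 2 ∧ (σ ∩ B).card = 0)).card
        + 2 * (K.filter (fun σ => σ.card = 2 ∧ (σ ∩ B).card = 1)).card
        + 1 * (K.filter (fun σ => σ.card = 2 ∧ (σ ∩ B).card = 2)).card
      = 3 * (K.filter (fun σ => σ.card = 3)).card := by
    have hdcE := dc10 (K.filter (fun σ => σ.card = 2)) (K.filter (fun σ => σ.card = 3))
    have hL : ∑ σ ∈ K.filter (fun σ => σ.card = 2),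
        ((K.filter (fun σ => σ.card = 3)).filter (fun τ => σ ⊆ τ)).card
        = ∑ σ ∈ K.filter (fun σ => σ.card = 2), (2 - (σ ∩ B).card / 2) := by
      refine Finset.sum_congr rfl fun σ hσ => ?_
      rw [Finset.mem_filter] at hσ
      obtain ⟨hK, h2⟩ := hσ
      have hle : (σ ∩ B).card ≤ σ.card := Finset.card_le_card Finset.inter_subset_left
      rw [Finset.filter_filter, hlink σ hK h2]
      by_cases hs : σ ⊆ B
      · rw [if_pos hs, (hsubB σ h2).mpr hs]
      · rw [if_neg hs]
        have hne2 : (σ ∩ B).card ≠ 2 := fun h => hs ((hsubB σ h2).mp h)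
        omega
    have hR : ∑ τ ∈ K.filter (fun σ => σ.card = 3),
        ((K.filter (fun σ => σ.card = 2)).filter (fun σ => σ ⊆ τ)).card
        = ∑ τ ∈ K.filter (fun σ => σ.card = 3), 3 := by
      refine Finset.sum_congr rfl fun τ hτ => ?_
      rw [Finset.mem_filter] at hτ
      obtain ⟨hτK, h3⟩ := hτ
      rw [Finset.filter_filter]
      have hset : K.filter (fun σ => σ.card = 2 ∧ σ ⊆ τ) = τ.powersetCard 2 := by
        ext σ
        simp only [Finset.mem_filter, Finset.mem_powersetCard]
        constructor
        · rintro ⟨hK, h2, hsub⟩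
          exact ⟨hsub, h2⟩
        · rintro ⟨hsub, h2⟩
          refine ⟨hdown τ hτK σ hsub (Finset.card_pos.mp (by omega)), h2, hsub⟩
      rw [hset, Finset.card_powersetCard, h3]
      rfl
    have hkey := keyE (fun k => 2 - k / 2)
    beta_reduce at hkey
    rw [hL, hR, hkey] at hdcE
    simp only [Finset.sum_const, smul_eq_mul] at hdcE
    clear hL hR hkey
    omega
  refine ⟨hAcard, ?_, ?_, ?_, ?_⟩ <;> omega
end

section
/- Let h_0,…,h_n be nonnegative real numbers with h_0=h_n=1 and h_i=h_{n−i} for all i, and define P(x) = 2^{−n} Σ_{i=0}^n h_i (x−1)^i (x+1)^{n−i}. Then: (1) P has degree n; (2) P(1)=1; (3) (−1)^n P(−x)=P(x) for all x; (4) every real root of P lies in the open interval (−1,1). -/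
open Polynomial Finset

theorem stmt_11 (n : ℕ) (h : ℕ → ℝ)
    (hpos : ∀ i, 0 ≤ h i) (h0 : h 0 = 1) (hn : h n = 1)
    (hsym : ∀ i ≤ n, h i = h (n - i))
    (P : Polynomial ℝ)
    (hP : P = Polynomial.C ((2 : ℝ) ^ n)⁻¹ *
      ∑ i ∈ Finset.range (n + 1),
        Polynomial.C (h i) * (Polynomial.X - 1) ^ i * (Polynomial.X + 1) ^ (n - i)) :
    P.degree = n ∧
    P.eval 1 = 1 ∧
    (∀ x : ℝ, (-1 : ℝ) ^ n * P.eval (-x) = P.eval x) ∧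
    (∀ x : ℝ, P.eval x = 0 → x ∈ Set.Ioo (-1 : ℝ) 1) := by
  have h2n : ((2:ℝ)^n) ≠ 0 := by positivity
  have hc : ((2:ℝ)^n)⁻¹ ≠ 0 := inv_ne_zero h2n
  -- the sum
  set S : Polynomial ℝ := ∑ i ∈ Finset.range (n + 1),
      Polynomial.C (h i) * (Polynomial.X - 1) ^ i * (Polynomial.X + 1) ^ (n - i) with hS
  -- eval formula
  have heval : ∀ x : ℝ, P.eval x =
      ((2:ℝ)^n)⁻¹ * ∑ i ∈ Finset.range (n + 1), h i * (x - 1) ^ i * (x + 1) ^ (n - i) := by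
    intro x
    simp [hP, hS, eval_finset_sum]
  -- eval at 1
  have heval1 : P.eval 1 = 1 := by
    rw [heval]
    rw [Finset.sum_eq_single 0]
    · simp only [h0, sub_self, pow_zero, one_mul, Nat.sub_zero]
      norm_num
    · intro i hi hi0
      simp [zero_pow hi0]
    · simp
  -- symmetry
  have hkey : ∀ x : ℝ, (-1 : ℝ) ^ n * P.eval (-x) = P.eval x := by
    intro x
    rw [heval, heval, ← Finset.sum_range_reflect, Finset.mul_sum, Finset.mul_sum,
      Finset.mul_sum]
    apply Finset.sum_congr rfl
    intro i hi
    have hin : i ≤ n := Nat.lt_succ_iff.mp (Finset.mem_range.mp hi)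
    simp only [Nat.add_sub_cancel]
    rw [Nat.sub_sub_self hin]
    have e1 : (-x - 1 : ℝ) = -1 * (x + 1) := by ring
    have e2 : (-x + 1 : ℝ) = -1 * (x - 1) := by ring
    rw [e1, e2, mul_pow, mul_pow]
    have hh : h (n - i) = h i := (hsym i hin).symm
    have hsign : ((-1:ℝ)) ^ (n - i) * ((-1:ℝ)) ^ i = (-1:ℝ) ^ n := by
      rw [← pow_add, Nat.sub_add_cancel hin]
    have hsq : ((-1:ℝ)) ^ n * ((-1:ℝ)) ^ n = 1 := by
      rw [← pow_add]
      exact Even.neg_one_pow ⟨n, rfl⟩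
    calc (-1:ℝ) ^ n * (((2:ℝ)^n)⁻¹ * (h (n - i) * ((-1:ℝ) ^ (n - i) * (x + 1) ^ (n - i)) *
          ((-1:ℝ) ^ i * (x - 1) ^ i)))
        = ((-1:ℝ) ^ n * ((-1:ℝ)^(n-i) * (-1:ℝ)^i)) *
            (((2:ℝ)^n)⁻¹ * (h (n - i) * (x - 1) ^ i * (x + 1) ^ (n - i))) := by ring
      _ = ((2:ℝ)^n)⁻¹ * (h i * (x - 1) ^ i * (x + 1) ^ (n - i)) := by
          rw [hsign, hsq, hh, one_mul]
  -- any root is < 1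
  have hroot_lt : ∀ x : ℝ, P.eval x = 0 → x < 1 := by
    intro x hx
    by_contra hge
    push_neg at hge
    have hx1 : (0:ℝ) ≤ x - 1 := by linarith
    have hx2 : (0:ℝ) < x + 1 := by linarith
    have hpos' : 0 < P.eval x := by
      rw [heval]
      apply mul_pos (by positivity)
      apply Finset.sum_pos'
      · intro i _
        have := hpos i
        positivity
      · exact ⟨0, by simp, by simp [h0]; positivity⟩
    linarith
  -- degree
  have hmono : ∀ i ≤ n, ((Polynomial.X - 1 : Polynomial ℝ) ^ i * (Polynomial.X + 1) ^ (n - i)).Monic := by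
    intro i hin
    have m1 : (Polynomial.X - 1 : Polynomial ℝ).Monic := by
      simpa using monic_X_sub_C (1:ℝ)
    have m2 : (Polynomial.X + 1 : Polynomial ℝ).Monic := by
      simpa using monic_X_add_C (1:ℝ)
    exact (m1.pow i).mul (m2.pow (n - i))
  have hndeg : ∀ i ≤ n, ((Polynomial.X - 1 : Polynomial ℝ) ^ i * (Polynomial.X + 1) ^ (n - i)).natDegree = n := by
    intro i hin
    have m1 : (Polynomial.X - 1 : Polynomial ℝ).Monic := by
      simpa using monic_X_sub_C (1:ℝ)
    have m2 : (Polynomial.X + 1 : Polynomial ℝ).Monic := by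
      simpa using monic_X_add_C (1:ℝ)
    have d1 : (Polynomial.X - 1 : Polynomial ℝ).natDegree = 1 := by
      simpa using Polynomial.natDegree_X_sub_C (1:ℝ)
    have d2 : (Polynomial.X + 1 : Polynomial ℝ).natDegree = 1 := by
      simpa using Polynomial.natDegree_X_add_C (1:ℝ)
    rw [(m1.pow i).natDegree_mul (m2.pow (n - i)), Polynomial.natDegree_pow,
      Polynomial.natDegree_pow, d1, d2]
    omega
  have hScoeff : S.coeff n = ∑ i ∈ Finset.range (n + 1), h i := by
    rw [hS, Polynomial.finset_sum_coeff]
    apply Finset.sum_congr rfl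
    intro i hi
    have hin : i ≤ n := Nat.lt_succ_iff.mp (Finset.mem_range.mp hi)
    rw [mul_assoc, Polynomial.coeff_C_mul]
    have := (hmono i hin).coeff_natDegree
    rw [hndeg i hin] at this
    rw [this, mul_one]
  have hsum_pos : 0 < ∑ i ∈ Finset.range (n + 1), h i := by
    have : (1:ℝ) ≤ ∑ i ∈ Finset.range (n + 1), h i := by
      rw [← h0]
      exact Finset.single_le_sum (fun i _ => hpos i) (by simp)
    linarith
  have hSdeg : S.degree ≤ (n : WithBot ℕ) := by
    rw [hS]
    refine le_trans (Polynomial.degree_sum_le _ _) (Finset.sup_le ?_)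
    intro i hi
    have hin : i ≤ n := Nat.lt_succ_iff.mp (Finset.mem_range.mp hi)
    calc (Polynomial.C (h i) * (Polynomial.X - 1) ^ i * (Polynomial.X + 1) ^ (n - i)).degree
        ≤ ((Polynomial.C (h i) * (Polynomial.X - 1) ^ i * (Polynomial.X + 1) ^ (n - i)).natDegree : WithBot ℕ) :=
          Polynomial.degree_le_natDegree
      _ ≤ (n : WithBot ℕ) := by
          rw [mul_assoc]
          have hle : (Polynomial.C (h i) * ((Polynomial.X - 1) ^ i * (Polynomial.X + 1) ^ (n - i))).natDegree ≤ n := by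
            refine le_trans (Polynomial.natDegree_mul_le) ?_
            simp [hndeg i hin]
          exact_mod_cast hle
  have hdeg : P.degree = n := by
    rw [hP, Polynomial.degree_C_mul hc]
    apply Polynomial.degree_eq_of_le_of_coeff_ne_zero hSdeg
    rw [hScoeff]
    exact ne_of_gt hsum_pos
  refine ⟨hdeg, heval1, hkey, ?_⟩
  intro x hx
  have h1 : x < 1 := hroot_lt x hx
  have hneg : P.eval (-x) = 0 := by
    have := hkey x
    rw [hx] at this
    have hne : ((-1:ℝ)) ^ n ≠ 0 := by
      apply pow_ne_zero; norm_num
    exact (mul_eq_zero.mp this).resolve_left hne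
  have h2 : -x < 1 := hroot_lt (-x) hneg
  exact ⟨by linarith, h1⟩
end

section
/- Define the polynomial T_6(x) = 6 − 9x² − 60x⁴ + 64x⁶. Then T_6 does not have 6 real roots (counted with multiplicity); in fact T_6 has at most 4 real roots. -/
open Polynomial in
theorem stmt_15 (P : Polynomial ℝ)
    (hP : P = Polynomial.C 6 - Polynomial.C 9 * Polynomial.X ^ 2
      - Polynomial.C 60 * Polynomial.X ^ 4 + Polynomial.C 64 * Polynomial.X ^ 6) :
    P.roots.card ≤ 4 ∧ P.roots.card ≠ 6 := by
  have hs : Real.sqrt 285 * Real.sqrt 285 = 285 := Real.mul_self_sqrt (by norm_num)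
  have hs15 : (15 : ℝ) < Real.sqrt 285 := by
    nlinarith [Real.sq_sqrt (by norm_num : (285:ℝ) ≥ 0), Real.sqrt_nonneg 285]
  set a : ℝ := (15 + Real.sqrt 285) / 80 with ha
  set b : ℝ := (Real.sqrt 285 - 15) / 80 with hb
  have hbpos : 0 < b := by rw [hb]; linarith
  -- second derivative
  have hD2 : derivative (derivative P) =
      Polynomial.C 1920 * ((X ^ 2 - Polynomial.C a) * (X ^ 2 + Polynomial.C b)) := by
    rw [hP]
    apply Polynomial.funext
    intro x
    simp [ha, hb]
    ring_nf
    nlinarith [hs]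
  have hq1 : (X ^ 2 - Polynomial.C a : ℝ[X]) ≠ 0 := by
    intro h
    have := congrArg (Polynomial.natDegree) h
    simp [Polynomial.natDegree_X_pow_sub_C] at this
  have hq2 : (X ^ 2 + Polynomial.C b : ℝ[X]) ≠ 0 := by
    intro h
    have := congrArg (fun q => Polynomial.eval 0 q) h
    simp at this
    linarith
  have hroots2 : (X ^ 2 + Polynomial.C b : ℝ[X]).roots = 0 := by
    apply Multiset.eq_zero_of_forall_notMem
    intro x hx
    rw [Polynomial.mem_roots hq2] at hx
    have := hx
    simp [Polynomial.IsRoot] at this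
    nlinarith [sq_nonneg x]
  have hcard2 : (derivative (derivative P)).roots.card ≤ 2 := by
    rw [hD2, Polynomial.roots_C_mul _ (by norm_num : (1920:ℝ) ≠ 0),
      Polynomial.roots_mul (mul_ne_zero hq1 hq2), hroots2]
    simp
    calc (X ^ 2 - Polynomial.C a : ℝ[X]).roots.card
        ≤ (X ^ 2 - Polynomial.C a : ℝ[X]).natDegree := Polynomial.card_roots' _
      _ = 2 := Polynomial.natDegree_X_pow_sub_C
  have h1 := Polynomial.card_roots_le_derivative P
  have h2 := Polynomial.card_roots_le_derivative (derivative P)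
  constructor
  · omega
  · omega
end

section
/- Let s≥1 be an integer, let L be the subdivision of the 1-simplex with s interior vertices, and let r_L(u,v)=sv+2uv+(s−1)v²−u² be its magic polynomial. Define f_n(x,y) by f_n(x,y)=(1+x)^n for n≤1 and, for n≥2, f_n = Σ_{σ∈L∖∂L} (−1)^{2−|σ|}(1+y)^{|σ∩Int|} f_{n−2+|σ∩∂|}. Prove the generating function identity Σ_{n≥0} f_n(x,y) t^n = (1/(1−t(x+1)))·(1 − r_L(−1−x,−1−y)/r_L(−1/t,−1−y)). -/
/-- Auxiliary: the recurrence kills the product against the quadratic. -/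
theorem stmt_16_key (a b : ℝ) (f : ℕ → ℝ) (h0 : f 0 = 1)
    (hrec : ∀ n, f (n+2) = b * f (n+1) + a * f n) :
    (PowerSeries.C (R := ℝ) a * PowerSeries.X ^ 2 + PowerSeries.C (R := ℝ) b * PowerSeries.X - 1)
        * PowerSeries.mk f
      = PowerSeries.C (R := ℝ) (b - f 1) * PowerSeries.X - 1 := by
  open PowerSeries in
  have hre : (C (R := ℝ) a * X^2 + C (R := ℝ) b * X - 1) * mk f
      = C (R := ℝ) a * (mk f * X^2) + C (R := ℝ) b * (mk f * X^1) - mk f := by ring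
  ext n
  rw [hre]
  match n with
  | 0 => simp [coeff_mul_X_pow', h0]
  | 1 => simp [coeff_mul_X_pow', coeff_mul_X_pow, h0]
  | (n+2) =>
      rw [show n+2 = n+1+1 by ring, map_sub, map_add, coeff_C_mul, coeff_C_mul,
        coeff_mul_X_pow, show n+1+1 = n+2 by ring, coeff_mul_X_pow]
      simp [hrec n]
      ring

/-- The generating function identity `∑ fₙ tⁿ = (1/(1-t(x+1)))·(1 - r_L(-1-x,-1-y)/r_L(-1/t,-1-y))`
for the subdivision `L` of the 1-simplex with `s` interior vertices, where
`r_L(u,v) = s·v + 2·u·v + (s-1)·v² - u²`.  The identity is stated in `ℝ⟦t⟧` after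
multiplying both sides by `(1 - (1+x)t)·t²·r_L(-1/t,-1-y)`, noting that
`t²·r_L(-1/t,-1-y) = ((s-1)(1+y)² - s(1+y))·t² + 2(1+y)·t - 1`. -/
theorem stmt_16 (s : ℕ) (hs : 1 ≤ s) (x y : ℝ) (f : ℕ → ℝ)
    (h0 : f 0 = 1) (h1 : f 1 = 1 + x)
    (hrec : ∀ n, f (n + 2) = 2 * (1 + y) * f (n + 1)
      + (((s : ℝ) - 1) * (1 + y) ^ 2 - (s : ℝ) * (1 + y)) * f n) :
    (1 - PowerSeries.C (R := ℝ) (1 + x) * PowerSeries.X) *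
        (PowerSeries.C (R := ℝ) (((s : ℝ) - 1) * (1 + y) ^ 2 - (s : ℝ) * (1 + y)) * PowerSeries.X ^ 2
          + PowerSeries.C (R := ℝ) (2 * (1 + y)) * PowerSeries.X - 1) *
        PowerSeries.mk f
      = (PowerSeries.C (R := ℝ) (((s : ℝ) - 1) * (1 + y) ^ 2 - (s : ℝ) * (1 + y)) * PowerSeries.X ^ 2
          + PowerSeries.C (R := ℝ) (2 * (1 + y)) * PowerSeries.X - 1)
        - PowerSeries.C (R := ℝ) ((s : ℝ) * (-1 - y) + 2 * (-1 - x) * (-1 - y)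
            + ((s : ℝ) - 1) * (-1 - y) ^ 2 - (-1 - x) ^ 2) * PowerSeries.X ^ 2 := by
  have key := stmt_16_key (((s : ℝ) - 1) * (1 + y) ^ 2 - (s : ℝ) * (1 + y)) (2 * (1 + y)) f h0
    hrec
  rw [mul_assoc, key, h1,
    show ((s : ℝ) * (-1 - y) + 2 * (-1 - x) * (-1 - y) + ((s : ℝ) - 1) * (-1 - y) ^ 2
        - (-1 - x) ^ 2)
      = (((s : ℝ) - 1) * (1 + y) ^ 2 - (s : ℝ) * (1 + y)) + (2 * (1 + y)) * (1 + x)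
        - (1 + x) * (1 + x) from by ring]
  simp only [map_sub, map_add, map_mul, map_pow, map_one]
  ring
end
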